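/- Let N ∈ ℕ*, σ > 0, and W be a symmetric N×N random matrix whose entries on and above the diagonal are i.i.d. N(0, σ²). Let B_{T,N} be its generalised matrix of moments (with u = (1,...,1)^T, B_{T,N}(l₁,l₂) = E[u^T W^{l₁+l₂} u]). Then for all l₁, l₂ ∈ {0,...,T-1}: B_{T,N}(l₁,l₂) ≤ (1/σ²) · (1/((l₁+l₂)/(N(N+1)/2) + 1)) · B_{T,N}(l₁+1, l₂+1). -/

import Mathlib

/-!
Write `L = l₁ + l₂`. Since `W` is symmetric, `B(l₁, l₂) = E[1ᵀ W^L 1]`, and expanding the matrix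
power writes this as a sum over vertex sequences `p₀, …, p_L` of `E ∏ₖ W_{pₖ pₖ₊₁}`. The entries
on and above the diagonal are independent, so each term is the product over edges `e` of the
Gaussian moments `m(k_e)`, where `k_e` counts the steps of the walk along `e`; in particular every
term is nonnegative. Gaussian integration by parts gives `m(k + 2) = (k + 1) σ² m(k)`.

Inserting a back-and-forth along the first maximally visited edge turns a walk of length `L` into
one of length `L + 2` whose weight is `(k + 1) σ²` times larger, where `k` is the maximal
multiplicity; as the `L` steps are spread over `N(N+1)/2` edges, `k ≥ L / (N(N+1)/2)`. The
insertion does not move the first maximally visited position, so the original walk can be read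
off and the map is injective. Summing the weights gives
`σ² (L / (N(N+1)/2) + 1) B(l₁, l₂) ≤ B(l₁ + 1, l₂ + 1)`.
-/

open MeasureTheory ProbabilityTheory Matrix Finset Function Real
open scoped NNReal

namespace ProbabilityTheory

noncomputable def gaussianMoment (v : ℝ≥0) (n : ℕ) : ℝ := ∫ x, x ^ n ∂gaussianReal 0 v

lemma hasDerivAt_gaussianPDFReal (v : ℝ≥0) (x : ℝ) :
    HasDerivAt (gaussianPDFReal 0 v) (-((v : ℝ)⁻¹ * x) * gaussianPDFReal 0 v x) x := by
  have hpdf : gaussianPDFReal 0 v =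
      fun y => (√(2 * π * v))⁻¹ * rexp (-(2 * (v : ℝ))⁻¹ * y ^ 2) := by
    ext y
    simp only [gaussianPDFReal, sub_zero]
    congr 2
    ring
  rw [hpdf]
  refine ((((hasDerivAt_pow 2 x).const_mul _).exp).const_mul _).congr_deriv ?_
  beta_reduce
  norm_num
  ring

lemma integrable_pow_gaussianReal (v : ℝ≥0) (n : ℕ) :
    Integrable (fun x : ℝ => x ^ n) (gaussianReal 0 v) :=
  integrable_pow_of_mem_interior_integrableExpSet (X := id)
    (by simp [integrableExpSet_id_gaussianReal]) n

lemma integrable_gaussianPDFReal_mul_pow {v : ℝ≥0} (hv : v ≠ 0) (n : ℕ) :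
    Integrable fun x => gaussianPDFReal 0 v x * x ^ n := by
  have h := integrable_pow_gaussianReal v n
  rw [gaussianReal_of_var_ne_zero 0 hv, integrable_withDensity_iff_integrable_smul'
    (measurable_gaussianPDF 0 v) (ae_of_all _ fun _ => gaussianPDF_lt_top)] at h
  simpa [toReal_gaussianPDF] using h

lemma gaussianMoment_add_two (v : ℝ≥0) (n : ℕ) :
    gaussianMoment v (n + 2) = (n + 1) * v * gaussianMoment v n := by
  rcases eq_or_ne v 0 with rfl | hv
  · simp [gaussianMoment]
  have I := integrable_gaussianPDFReal_mul_pow hv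
  have hderiv (x : ℝ) : HasDerivAt (fun x => gaussianPDFReal 0 v x * x ^ (n + 1))
      ((n + 1) * (gaussianPDFReal 0 v x * x ^ n)
        - (v : ℝ)⁻¹ * (gaussianPDFReal 0 v x * x ^ (n + 2))) x :=
    ((hasDerivAt_gaussianPDFReal v x).mul (hasDerivAt_pow (n + 1) x)).congr_deriv
      (by push_cast; ring)
  have h := integral_eq_zero_of_hasDerivAt_of_integrable hderiv
    (((I n).const_mul _).sub ((I (n + 2)).const_mul _)) (I (n + 1))
  rw [integral_sub ((I n).const_mul _) ((I (n + 2)).const_mul _),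
    integral_const_mul, integral_const_mul] at h
  simp only [gaussianMoment, integral_gaussianReal_eq_integral_smul hv, smul_eq_mul]
  have hv' : (v : ℝ) ≠ 0 := by exact_mod_cast hv
  field_simp at h
  linarith

lemma gaussianMoment_nonneg (v : ℝ≥0) : ∀ n, 0 ≤ gaussianMoment v n
  | 0 => by simp [gaussianMoment]
  | 1 => by simp [gaussianMoment]
  | n + 2 => by
    rw [gaussianMoment_add_two]
    have := gaussianMoment_nonneg v n
    positivity

end ProbabilityTheory

theorem Matrix.sum_mulVec_pow_eq_sum_walks {R V : Type*} [CommSemiring R] [Fintype V]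
    [DecidableEq V] (A : Matrix V V R) (L : ℕ) (w : V → R) :
    ∑ i, (A ^ L *ᵥ w) i =
      ∑ p : Fin (L + 1) → V, (∏ k : Fin L, A (p k.castSucc) (p k.succ)) * w (p (Fin.last L)) := by
  induction L generalizing w with
  | zero => simpa using ((Equiv.funUnique (Fin 1) V).sum_comp w).symm
  | succ L ih =>
    rw [pow_succ, ← mulVec_mulVec, ih, ← (Fin.snocEquiv fun _ => V).sum_comp
      fun q => (∏ k : Fin (L + 1), A (q k.castSucc) (q k.succ)) * w (q (Fin.last (L + 1))),
      Fintype.sum_prod_type_right]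
    refine Fintype.sum_congr _ _ fun p => ?_
    simp only [mulVec, dotProduct, mul_sum, Fin.snocEquiv, Equiv.coe_fn_mk, Fin.prod_univ_castSucc,
      Fin.succ_castSucc, Fin.succ_last, Fin.snoc_castSucc, Fin.snoc_last, mul_assoc]

theorem Matrix.IsSymm.pow_mulVec_dotProduct_pow_mulVec {R V : Type*} [CommSemiring R]
    [Fintype V] [DecidableEq V] {A : Matrix V V R} (hA : A.IsSymm) (a b : ℕ) (u : V → R) :
    (A ^ a *ᵥ u) ⬝ᵥ (A ^ b *ᵥ u) = u ⬝ᵥ (A ^ (a + b) *ᵥ u) := by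
  rw [pow_add, ← mulVec_mulVec, dotProduct_mulVec u, ← mulVec_transpose, (hA.pow a).eq]

theorem Fintype.sum_le_sum_of_injective {ι κ M : Type*} [Fintype ι] [Fintype κ]
    [AddCommMonoid M] [PartialOrder M] [IsOrderedAddMonoid M] {f : ι → M} {g : κ → M}
    {i : ι → κ} (hi : Injective i) (hg : ∀ k, 0 ≤ g k) (h : ∀ a, f a ≤ g (i a)) :
    ∑ a, f a ≤ ∑ k, g k :=
  calc ∑ a, f a ≤ ∑ a, g (i a) := sum_le_sum fun a _ => h a
    _ = ∑ k ∈ univ.map ⟨i, hi⟩, g k := (sum_map univ ⟨i, hi⟩ g).symm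
    _ ≤ ∑ k, g k := sum_le_sum_of_subset_of_nonneg (subset_univ _) fun k _ _ => hg k

namespace WignerWalk

variable {V E : Type*} (lab : V → V → E)

def edgeSeq {n : ℕ} (p : Fin (n + 1) → V) (k : Fin n) : E := lab (p k.castSucc) (p k.succ)

section Detour

variable {n : ℕ} (t : Fin n)

/-- `p ∘ detourIdx t` is the walk `p₀, …, p_t, p_{t+1}, p_t, p_{t+1}, …, p_n`, which runs through
the edge `t` of `p` three times. -/
def detourIdx (j : Fin (n + 3)) : Fin (n + 1) :=
  ⟨if j ≤ (t : ℕ) + 1 then j else if j = (t : ℕ) + 2 then t else j - 2, by split_ifs <;> omega⟩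

def detourEdgeIdx (k : Fin (n + 2)) : Fin n :=
  ⟨if k ≤ (t : ℕ) then k else if k ≤ (t : ℕ) + 2 then t else k - 2, by split_ifs <;> omega⟩

lemma detourIdx_surjective : Surjective (detourIdx t) := fun j =>
  ⟨⟨if j ≤ (t : ℕ) + 1 then j else j + 2, by split_ifs <;> omega⟩,
    Fin.ext <| by simp only [detourIdx]; split_ifs <;> omega⟩

lemma edgeSeq_comp_detourIdx (hlab : ∀ i j, lab i j = lab j i) (p : Fin (n + 1) → V)
    (k : Fin (n + 2)) :
    edgeSeq lab (p ∘ detourIdx t) k = edgeSeq lab p (detourEdgeIdx t k) := by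
  have key : (detourIdx t k.castSucc = (detourEdgeIdx t k).castSucc ∧
        detourIdx t k.succ = (detourEdgeIdx t k).succ) ∨
      (detourIdx t k.castSucc = (detourEdgeIdx t k).succ ∧
        detourIdx t k.succ = (detourEdgeIdx t k).castSucc) := by
    simp only [Fin.ext_iff, detourIdx, detourEdgeIdx, Fin.val_castSucc, Fin.val_succ]
    split_ifs <;> omega
  rcases key with ⟨h₁, h₂⟩ | ⟨h₁, h₂⟩
  · simp only [edgeSeq, Function.comp_apply, h₁, h₂]
  · simp only [edgeSeq, Function.comp_apply, h₁, h₂]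
    exact hlab _ _

lemma sum_comp_detourEdgeIdx {M : Type*} [AddCommMonoid M] (f : Fin n → M) :
    ∑ k, f (detourEdgeIdx t k) = ∑ k, f k + 2 • f t := by
  rw [Fin.sum_univ_succAbove _ ⟨t + 1, by omega⟩, Fin.sum_univ_succAbove _ ⟨t + 1, by omega⟩]
  have h₁ : detourEdgeIdx t ⟨t + 1, by omega⟩ = t := by
    ext
    simp [detourEdgeIdx]
  have h₂ : detourEdgeIdx t
      ((⟨t + 1, by omega⟩ : Fin (n + 2)).succAbove ⟨t + 1, by omega⟩) = t := by
    ext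
    simp [detourEdgeIdx, Fin.succAbove]
  have h₃ (j : Fin n) : detourEdgeIdx t ((⟨t + 1, by omega⟩ : Fin (n + 2)).succAbove
      ((⟨t + 1, by omega⟩ : Fin (n + 1)).succAbove j)) = j := by
    ext
    simp only [detourEdgeIdx, Fin.succAbove, Fin.lt_def]
    split_ifs <;> simp only [Fin.val_castSucc, Fin.val_succ] at * <;> omega
  simp only [h₁, h₂, h₃]
  abel

end Detour

variable [DecidableEq E]

def edgeMult {n : ℕ} (p : Fin (n + 1) → V) (e : E) : ℕ := #{k | edgeSeq lab p k = e}

lemma edgeMult_comp_detourIdx (hlab : ∀ i j, lab i j = lab j i) {n : ℕ} (t : Fin n)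
    (p : Fin (n + 1) → V) (e : E) :
    edgeMult lab (p ∘ detourIdx t) e =
      edgeMult lab p e + if edgeSeq lab p t = e then 2 else 0 := by
  simp only [edgeMult, card_filter, edgeSeq_comp_detourIdx lab t hlab,
    sum_comp_detourEdgeIdx t fun k => if edgeSeq lab p k = e then 1 else 0]
  split_ifs <;> rfl

variable [Fintype E]

lemma prod_edgeSeq {M : Type*} [CommMonoid M] {n : ℕ} (p : Fin (n + 1) → V) (x : E → M) :
    ∏ k, x (edgeSeq lab p k) = ∏ e, x e ^ edgeMult lab p e := by
  simp_rw [edgeMult, ← prod_const, prod_fiberwise']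

def maxEdgeMult {n : ℕ} (p : Fin (n + 1) → V) : ℕ := univ.sup (edgeMult lab p)

lemma edgeMult_le_maxEdgeMult {n : ℕ} (p : Fin (n + 1) → V) (e : E) :
    edgeMult lab p e ≤ maxEdgeMult lab p :=
  le_sup (mem_univ e)

lemma le_card_mul_maxEdgeMult {n : ℕ} (p : Fin (n + 1) → V) :
    n ≤ Fintype.card E * maxEdgeMult lab p :=
  calc n = ∑ e, edgeMult lab p e := by
        simpa [edgeMult] using card_eq_sum_card_fiberwise (s := univ) (t := univ)
          (f := edgeSeq lab p) fun _ _ => mem_univ _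
    _ ≤ ∑ _e : E, maxEdgeMult lab p := sum_le_sum fun e _ => edgeMult_le_maxEdgeMult lab p e
    _ = Fintype.card E * maxEdgeMult lab p := by simp

def maxPositions {n : ℕ} (p : Fin (n + 1) → V) : Finset (Fin n) :=
  {k | edgeMult lab p (edgeSeq lab p k) = maxEdgeMult lab p}

lemma maxPositions_nonempty {L : ℕ} (p : Fin (L + 2) → V) : (maxPositions lab p).Nonempty := by
  obtain ⟨e, -, he⟩ := exists_mem_eq_sup univ ⟨edgeSeq lab p 0, mem_univ _⟩ (edgeMult lab p)
  have hpos : 0 < edgeMult lab p e := by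
    rw [← he]
    exact lt_of_lt_of_le (card_pos.2 ⟨0, by simp⟩) (edgeMult_le_maxEdgeMult lab p (edgeSeq lab p 0))
  obtain ⟨k, hk⟩ := card_pos.1 hpos
  exact ⟨k, by simp_all [maxPositions, maxEdgeMult]⟩

section DoubleMaxEdge

variable {L : ℕ} (p : Fin (L + 2) → V)

/-- Taking the first maximal position, rather than any, is what makes `doubleMaxEdge` injective:
see `val_firstMaxPos_doubleMaxEdge`. -/
def firstMaxPos : Fin (L + 1) := (maxPositions lab p).min' (maxPositions_nonempty lab p)

def doubleMaxEdge : Fin (L + 4) → V := p ∘ detourIdx (firstMaxPos lab p)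

lemma edgeMult_firstMaxPos :
    edgeMult lab p (edgeSeq lab p (firstMaxPos lab p)) = maxEdgeMult lab p :=
  (mem_filter.1 (min'_mem (maxPositions lab p) (maxPositions_nonempty lab p))).2

variable (hlab : ∀ i j, lab i j = lab j i)
include hlab

lemma edgeMult_doubleMaxEdge (e : E) :
    edgeMult lab (doubleMaxEdge lab p) e =
      edgeMult lab p e + if edgeSeq lab p (firstMaxPos lab p) = e then 2 else 0 :=
  edgeMult_comp_detourIdx lab hlab _ p e

lemma maxEdgeMult_doubleMaxEdge :
    maxEdgeMult lab (doubleMaxEdge lab p) = maxEdgeMult lab p + 2 := by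
  apply le_antisymm
  · refine Finset.sup_le fun e _ => ?_
    have := edgeMult_le_maxEdgeMult lab p e
    rw [edgeMult_doubleMaxEdge lab p hlab]
    split_ifs <;> omega
  · calc maxEdgeMult lab p + 2
        = edgeMult lab (doubleMaxEdge lab p) (edgeSeq lab p (firstMaxPos lab p)) := by
          rw [edgeMult_doubleMaxEdge lab p hlab, if_pos rfl, edgeMult_firstMaxPos]
      _ ≤ _ := edgeMult_le_maxEdgeMult lab _ _

lemma val_firstMaxPos_doubleMaxEdge :
    (firstMaxPos lab (doubleMaxEdge lab p) : ℕ) = firstMaxPos lab p := by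
  set t := firstMaxPos lab p
  have hmult := edgeMult_doubleMaxEdge lab p hlab
  have hmax := maxEdgeMult_doubleMaxEdge lab p hlab
  have hedge (k : Fin (L + 3)) (hk : (k : ℕ) ≤ t) :
      edgeSeq lab (doubleMaxEdge lab p) k = edgeSeq lab p ⟨k, by omega⟩ := by
    rw [doubleMaxEdge, edgeSeq_comp_detourIdx lab t hlab]
    congr
    ext
    simp [detourEdgeIdx, hk]
  apply le_antisymm
  · have hmem : (⟨t, by omega⟩ : Fin (L + 3)) ∈ maxPositions lab (doubleMaxEdge lab p) := by
      rw [maxPositions, mem_filter, hedge _ le_rfl, hmult, if_pos rfl, edgeMult_firstMaxPos, hmax]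
      exact ⟨mem_univ _, rfl⟩
    exact min'_le _ _ hmem
  · by_contra! hlt
    set t' := firstMaxPos lab (doubleMaxEdge lab p)
    have ht' := edgeMult_firstMaxPos lab (doubleMaxEdge lab p)
    rw [hedge t' hlt.le, hmult, hmax] at ht'
    by_cases he : edgeSeq lab p t = edgeSeq lab p ⟨t', by omega⟩
    · rw [if_pos he, add_left_inj] at ht'
      have : t ≤ ⟨t', by omega⟩ :=
        min'_le (maxPositions lab p) _ (mem_filter.2 ⟨mem_univ _, ht'⟩)
      exact absurd hlt (not_lt.2 this)
    · rw [if_neg he] at ht'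
      have := edgeMult_le_maxEdgeMult lab p (edgeSeq lab p ⟨t', by omega⟩)
      omega

lemma doubleMaxEdge_injective : Injective (doubleMaxEdge (L := L) lab) := by
  intro p p' h
  have ht : firstMaxPos lab p = firstMaxPos lab p' := Fin.ext <| by
    rw [← val_firstMaxPos_doubleMaxEdge lab p hlab, ← val_firstMaxPos_doubleMaxEdge lab p' hlab, h]
  rw [doubleMaxEdge, doubleMaxEdge, ht] at h
  exact (detourIdx_surjective _).injective_comp_right h

end DoubleMaxEdge

variable (v : ℝ≥0)

noncomputable def walkMoment {n : ℕ} (p : Fin (n + 1) → V) : ℝ :=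
  ∏ e, gaussianMoment v (edgeMult lab p e)

lemma walkMoment_nonneg {n : ℕ} (p : Fin (n + 1) → V) : 0 ≤ walkMoment lab v p :=
  prod_nonneg fun _ _ => gaussianMoment_nonneg v _

lemma walkMoment_eq_of_edgeMult_eq_add_two {n : ℕ} {p : Fin (n + 1) → V}
    {q : Fin (n + 3) → V} (e₀ : E)
    (h : ∀ e, edgeMult lab q e = edgeMult lab p e + if e₀ = e then 2 else 0) :
    walkMoment lab v q = (edgeMult lab p e₀ + 1) * v * walkMoment lab v p := by
  have hfactor (e : E) : gaussianMoment v (edgeMult lab q e) =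
      (if e₀ = e then ((edgeMult lab p e₀ + 1 : ℝ) * v) else 1) *
        gaussianMoment v (edgeMult lab p e) := by
    rw [h]
    split_ifs with he
    · rw [← he, gaussianMoment_add_two]
    · simp
  simp only [walkMoment, hfactor, prod_mul_distrib, prod_ite_eq, mem_univ, if_true]

theorem mul_sum_walkMoment_le [Fintype V] (hlab : ∀ i j, lab i j = lab j i) (L : ℕ) :
    v * ((L : ℝ) / Fintype.card E + 1) * ∑ p : Fin (L + 1) → V, walkMoment lab v p
      ≤ ∑ q : Fin (L + 3) → V, walkMoment lab v q := by
  rw [mul_sum]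
  rcases L with _ | L
  -- A walk of length `0` has no edge to double; it goes to the constant walk of length `2`.
  · refine Fintype.sum_le_sum_of_injective (i := fun (p : Fin 1 → V) (_ : Fin 3) => p 0)
      (fun p p' h => funext fun k => by rw [Fin.fin_one_eq_zero k]; exact congrFun h 0)
      (walkMoment_nonneg lab v) fun p => ?_
    have hmult (e : E) : edgeMult lab (fun _ : Fin 3 => p 0) e =
        edgeMult lab p e + if lab (p 0) (p 0) = e then 2 else 0 := by
      simp only [edgeMult, edgeSeq]
      split_ifs <;> simp [*]
    rw [walkMoment_eq_of_edgeMult_eq_add_two lab v _ hmult]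
    simp [edgeMult]
  · refine Fintype.sum_le_sum_of_injective (doubleMaxEdge_injective lab hlab)
      (walkMoment_nonneg lab v) fun p => ?_
    rw [walkMoment_eq_of_edgeMult_eq_add_two lab v _ (edgeMult_doubleMaxEdge lab p hlab),
      edgeMult_firstMaxPos]
    have hL : ((L + 1 : ℕ) : ℝ) / Fintype.card E ≤ maxEdgeMult lab p :=
      div_le_of_le_mul₀ (by positivity) (by positivity) <| by
        rw [mul_comm]
        exact_mod_cast le_card_mul_maxEdgeMult lab p
    have := walkMoment_nonneg lab v p
    calc (v : ℝ) * (((L + 1 : ℕ) : ℝ) / Fintype.card E + 1) * walkMoment lab v p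
        ≤ v * (maxEdgeMult lab p + 1) * walkMoment lab v p := by gcongr
      _ = _ := by ring

def wignerMatrix {R : Type*} (x : E → R) : Matrix V V R := Matrix.of fun i j => x (lab i j)

lemma sum_wignerMatrix_pow_mulVec {R : Type*} [CommSemiring R] [Fintype V] [DecidableEq V]
    (x : E → R) (L : ℕ) :
    ∑ i, (wignerMatrix lab x ^ L *ᵥ 1) i = ∑ p : Fin (L + 1) → V, ∏ e, x e ^ edgeMult lab p e := by
  rw [sum_mulVec_pow_eq_sum_walks]
  exact Fintype.sum_congr _ _ fun p => by rw [Pi.one_apply, mul_one, ← prod_edgeSeq]; rfl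

lemma integral_sum_prod_pow_edgeMult [Fintype V] (L : ℕ) :
    ∫ x, ∑ p : Fin (L + 1) → V, ∏ e, x e ^ edgeMult lab p e
        ∂(Measure.pi fun _ => gaussianReal 0 v)
      = ∑ p : Fin (L + 1) → V, walkMoment lab v p := by
  rw [integral_finsetSum _ fun p _ =>
    Integrable.fintype_prod fun e => integrable_pow_gaussianReal v _]
  exact sum_congr rfl fun p _ => integral_fintype_prod_eq_prod _

section SymmetricGaussianMatrix

variable {α : Type*} [LinearOrder α]

def sortedPair (i j : α) : {p : α × α // p.1 ≤ p.2} := Sym2.sortEquiv s(i, j)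

lemma sortedPair_comm (i j : α) : sortedPair i j = sortedPair j i := by
  simp only [sortedPair, Sym2.eq_swap]

lemma cast_card_sortedPairs [Fintype α] :
    (Fintype.card {p : α × α // p.1 ≤ p.2} : ℝ) = Fintype.card α * (Fintype.card α + 1) / 2 := by
  rw [← Fintype.card_congr Sym2.sortEquiv, Sym2.card, Nat.cast_choose_two]
  push_cast
  ring

lemma eq_wignerMatrix_of_isSymm {R : Type*} {A : Matrix α α R} (hA : A.IsSymm) :
    A = wignerMatrix sortedPair fun p => A p.1.1 p.1.2 := by
  ext i j
  rcases le_total i j with h | h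
  · simp [wignerMatrix, sortedPair, h]
  · simp [wignerMatrix, sortedPair, h, hA.apply i j]

theorem integral_pow_mulVec_dotProduct_pow_mulVec {Ω : Type*} [MeasurableSpace Ω] [Fintype α]
    {μ : Measure Ω} {W : Ω → Matrix α α ℝ} (hWmeas : ∀ i j, Measurable fun ω => W ω i j)
    (hsym : ∀ ω, (W ω).IsSymm) {v : ℝ≥0}
    (hlaw : μ.map (fun ω (p : {p : α × α // p.1 ≤ p.2}) => W ω p.1.1 p.1.2) =
      Measure.pi fun _ => gaussianReal 0 v) (a b : ℕ) :
    ∫ ω, (W ω ^ a *ᵥ 1) ⬝ᵥ (W ω ^ b *ᵥ 1) ∂μ =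
      ∑ p : Fin (a + b + 1) → α, walkMoment sortedPair v p := by
  have hφ : Measurable fun ω (p : {p : α × α // p.1 ≤ p.2}) => W ω p.1.1 p.1.2 :=
    measurable_pi_lambda _ fun p => hWmeas _ _
  simp_rw [(hsym _).pow_mulVec_dotProduct_pow_mulVec, one_dotProduct]
  conv_lhs =>
    enter [2, ω]
    rw [eq_wignerMatrix_of_isSymm (hsym ω), sum_wignerMatrix_pow_mulVec]
  rw [← integral_sum_prod_pow_edgeMult _ v, ← hlaw,
    integral_map hφ.aemeasurable (by fun_prop : Continuous _).aestronglyMeasurable]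

end SymmetricGaussianMatrix

end WignerWalk

open WignerWalk

theorem stmt11_general {Ω : Type*} [MeasurableSpace Ω] (μ : Measure Ω)
    (N : ℕ) (σ : ℝ) (hσ : 0 < σ)
    (W : Ω → Matrix (Fin N) (Fin N) ℝ)
    (hWmeas : ∀ i j, Measurable fun ω => W ω i j)
    (hsym : ∀ ω, (W ω).IsSymm)
    (hlaw : Measure.map
        (fun ω => fun p : {p : Fin N × Fin N // p.1 ≤ p.2} => W ω p.1.1 p.1.2) μ
      = Measure.pi fun _ => gaussianReal 0 (Real.toNNReal (σ ^ 2)))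
    (T : ℕ)
    (u : Fin N → ℝ) (hu : u = fun _ => 1)
    (Bf : ℕ → ℕ → ℝ)
    (hBdef : ∀ l₁ l₂ : ℕ,
      Bf l₁ l₂ = ∫ ω, ∑ i, ((W ω ^ l₁) *ᵥ u) i * ((W ω ^ l₂) *ᵥ u) i ∂μ) :
    ∀ l₁ l₂ : ℕ, l₁ < T → l₂ < T →
      Bf l₁ l₂ ≤ (1 / σ ^ 2) *
        (1 / (((l₁ : ℝ) + (l₂ : ℝ)) / ((N : ℝ) * ((N : ℝ) + 1) / 2) + 1)) *
        Bf (l₁ + 1) (l₂ + 1) := by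
  subst hu
  intro l₁ l₂ _ _
  have hB (a b : ℕ) : Bf a b = ∑ p : Fin (a + b + 1) → Fin N, walkMoment sortedPair _ p :=
    (hBdef a b).trans (integral_pow_mulVec_dotProduct_pow_mulVec hWmeas hsym hlaw a b)
  have key := mul_sum_walkMoment_le (V := Fin N) sortedPair (σ ^ 2).toNNReal sortedPair_comm
    (l₁ + l₂)
  rw [cast_card_sortedPairs, Fintype.card_fin, Real.coe_toNNReal _ (sq_nonneg σ),
    Nat.cast_add] at key
  rw [hB, hB, show l₁ + 1 + (l₂ + 1) = l₁ + l₂ + 2 by ring]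
  rw [one_div_mul_one_div, one_div_mul_eq_div, le_div_iff₀ (by positivity), mul_comm]
  exact key

theorem stmt11 {Ω : Type*} [MeasurableSpace Ω] (μ : Measure Ω) [IsProbabilityMeasure μ]
    (N : ℕ) (hN : 0 < N) (σ : ℝ) (hσ : 0 < σ)
    (W : Ω → Matrix (Fin N) (Fin N) ℝ)
    (hWmeas : ∀ i j, Measurable fun ω => W ω i j)
    (hsym : ∀ ω, (W ω).IsSymm)
    (hlaw : Measure.map
        (fun ω => fun p : {p : Fin N × Fin N // p.1 ≤ p.2} => W ω p.1.1 p.1.2) μ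
      = Measure.pi fun _ => gaussianReal 0 (Real.toNNReal (σ ^ 2)))
    (T : ℕ)
    (u : Fin N → ℝ) (hu : u = fun _ => 1)
    (Bf : ℕ → ℕ → ℝ)
    (hBdef : ∀ l₁ l₂ : ℕ,
      Bf l₁ l₂ = ∫ ω, ∑ i, ((W ω ^ l₁) *ᵥ u) i * ((W ω ^ l₂) *ᵥ u) i ∂μ) :
    ∀ l₁ l₂ : ℕ, l₁ < T → l₂ < T →
      Bf l₁ l₂ ≤ (1 / σ ^ 2) *
        (1 / (((l₁ : ℝ) + (l₂ : ℝ)) / ((N : ℝ) * ((N : ℝ) + 1) / 2) + 1)) *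
        Bf (l₁ + 1) (l₂ + 1) :=
  stmt11_general μ N σ hσ W hWmeas hsym hlaw T u hu Bf hBdef
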